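/- For all 2 × 2 matrices A, B with entries in [0,1] and every vector v ∈ [0,1]², one has (A ∧ B)(v) = A(v) ∧ B(v), where A ∧ B is the entrywise meet of matrices, (A v)ᵢ = minⱼ min(A_{ij} + vⱼ, 1), and ∧ on vectors is the componentwise meet. Together with the closure, linearity and multiplicativity of the action, this establishes that S(2) is a semimodule over the semiring MV₂(I). -/

import Mathlib

/-- The action of a `2 × 2` matrix on a vector in the semiring `([0,1], ∧, ⊕)`:
`(A v)ᵢ = ∧ⱼ min(A_{ij} + vⱼ, 1)`. -/
def mvAct (A : Matrix (Fin 2) (Fin 2) ℝ) (v : Fin 2 → ℝ) : Fin 2 → ℝ :=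
  fun i => min (min (A i 0 + v 0) 1) (min (A i 1 + v 1) 1)

/-- The entrywise meet of matrices. -/
def mvMeet (A B : Matrix (Fin 2) (Fin 2) ℝ) : Matrix (Fin 2) (Fin 2) ℝ :=
  Matrix.of fun i j => min (A i j) (B i j)

theorem min_min_add_min_distrib {α : Type*} [LinearOrder α] [Add α] [AddRightMono α]
    (a b c d : α) : min (min a b + c) d = min (min (a + c) d) (min (b + c) d) := by
  rw [← min_add_add_right, min_min_min_comm, min_self]

theorem mvAct_mvMeet_general (A B : Matrix (Fin 2) (Fin 2) ℝ)
    (v : Fin 2 → ℝ) :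
    mvAct (mvMeet A B) v = fun i => min (mvAct A v i) (mvAct B v i) := by
  funext i
  simp only [mvAct, mvMeet, Matrix.of_apply, min_min_add_min_distrib]
  exact min_min_min_comm _ _ _ _

/-- The action is additive in the matrix: `(A ∧ B)(v) = A(v) ∧ B(v)` for all
`2 × 2` matrices with entries in `[0,1]` and every vector with entries in `[0,1]`. -/
theorem mvAct_mvMeet (A B : Matrix (Fin 2) (Fin 2) ℝ)
    (hA : ∀ i j, A i j ∈ Set.Icc (0 : ℝ) 1)
    (hB : ∀ i j, B i j ∈ Set.Icc (0 : ℝ) 1)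
    (v : Fin 2 → ℝ) (hv : ∀ j, v j ∈ Set.Icc (0 : ℝ) 1) :
    mvAct (mvMeet A B) v = fun i => min (mvAct A v i) (mvAct B v i) :=
  mvAct_mvMeet_general A B v
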